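/- In Γ^p, for pairwise distinct i, j, k ∈ ℤ/pℤ and any integer e, the identity [σᵢ^{(j−k)e}·σⱼ^{(k−i)e}, σ_k^{(i−j)e}·σᵢ^{(j−k)e}] = σ_{i,(j−i)(i−k)e}^{−2(j−k)e}·σᵢ^{2(j−k)e} holds, where all exponents and the second index of σ_{i,·} are read modulo p. -/

import Mathlib

/-- The commutator `[g, h] = g⁻¹ h⁻¹ g h`. -/
def pbra {G : Type*} [Group G] (g h : G) : G := g⁻¹ * h⁻¹ * g * h

/-- The relators `α^p, τ^p` of `Γ = ⟨α, τ ∣ α^p, τ^p⟩`. -/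
def CpCpRels (p : ℕ) : Set (FreeGroup (Fin 2)) :=
  {FreeGroup.of 0 ^ p, FreeGroup.of 1 ^ p}

/-- `Γ = ⟨α, τ ∣ α^p, τ^p⟩`, the free product of two cyclic groups of order `p`. -/
def Gam (p : ℕ) : Type := PresentedGroup (CpCpRels p)

instance (p : ℕ) : Group (Gam p) := by unfold Gam; infer_instance

/-- The generator `α` of `Γ`. -/
def αΓ (p : ℕ) : Gam p := PresentedGroup.of 0

/-- The generator `τ` of `Γ`. -/
def τΓ (p : ℕ) : Gam p := PresentedGroup.of 1

/-- `αᵢ ∈ Γ^p`: the element whose `i`-th coordinate is `α`, others trivial. -/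
def αt (p : ℕ) (i : ZMod p) : ZMod p → Gam p := Pi.mulSingle i (αΓ p)

/-- `τᵢ ∈ Γ^p`: the element whose `i`-th coordinate is `τ`, others trivial. -/
def τt (p : ℕ) (i : ZMod p) : ZMod p → Gam p := Pi.mulSingle i (τΓ p)

/-- `σᵢ = τᵢ·α_{i+1}·α_{i+2}²···α_{i+k}^k···α_{i-1}^{p-1} ∈ Γ^p`
(indices mod `p`): the element of `Γ^p` whose `i`-th coordinate is `τ` and
whose `(i+k)`-th coordinate is `α^k` for `1 ≤ k ≤ p-1`. -/
def σg (p : ℕ) (i : ZMod p) : ZMod p → Gam p :=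
  fun x => if x = i then τΓ p else αΓ p ^ (x - i).val

/-- `σ_{i,n} = σᵢ^{αᵢⁿ} = αᵢ⁻ⁿ·σᵢ·αᵢⁿ ∈ Γ^p`, with the exponent `n` read
modulo `p`. -/
def σgn (p : ℕ) (i n : ZMod p) : ZMod p → Gam p :=
  (αt p i ^ n.val)⁻¹ * σg p i * αt p i ^ n.val

/-!
Both sides are compared coordinatewise, using that `α` and `τ` have order dividing `p`, so that
exponents may be added and multiplied in `ZMod p`. At the coordinate `i` the two arguments of the
commutator are `τ^a w` and `w⁻¹ τ^a` with `a = (j - k)e` and `w = α^{(j-i)(i-k)e}`, and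
`[τ^a w, w⁻¹ τ^a] = (w⁻¹ τ w)^{-2a} τ^{2a}`. At a coordinate `x ≠ i` the right-hand side is
`α^{-m} α^m = 1`; on the left, the second argument is trivial at `x = j` and the first at `x = k`
(the two `α`-exponents there are opposite), and elsewhere everything is a power of `α`.
-/

section PowVal

variable {G : Type*} [Group G] {p : ℕ} {g : G}

theorem pow_val_add_of_pow_eq_one [NeZero p] (hg : g ^ p = 1) (x y : ZMod p) :
    g ^ (x + y).val = g ^ x.val * g ^ y.val := by
  rw [← pow_add, ZMod.val_add, ← pow_eq_pow_mod _ hg]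

theorem pow_val_mul_of_pow_eq_one (hg : g ^ p = 1) (x y : ZMod p) :
    g ^ (x * y).val = (g ^ x.val) ^ y.val := by
  rw [← pow_mul, ZMod.val_mul, ← pow_eq_pow_mod _ hg]

theorem pow_val_mul_pow_val_of_add_eq_zero [NeZero p] (hg : g ^ p = 1) {x y : ZMod p}
    (hxy : x + y = 0) : g ^ x.val * g ^ y.val = 1 := by
  rw [← pow_val_add_of_pow_eq_one hg, hxy, ZMod.val_zero, pow_zero]

theorem pow_val_neg_of_pow_eq_one [NeZero p] (hg : g ^ p = 1) (x : ZMod p) :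
    g ^ (-x).val = (g ^ x.val)⁻¹ :=
  eq_inv_of_mul_eq_one_left (pow_val_mul_pow_val_of_add_eq_zero hg (neg_add_cancel x))

end PowVal

section Commutator

variable {G : Type*} [Group G]

theorem pbra_eq_one_of_commute {g h : G} (hgh : Commute g h) : pbra g h = 1 := by
  rw [pbra, mul_assoc, hgh.eq, ← mul_inv_rev, inv_mul_cancel]

theorem Pi.pbra_apply {ι : Type*} (f g : ι → G) (x : ι) : pbra f g x = pbra (f x) (g x) := rfl

theorem pbra_pow_val_mul_inv_mul_pow_val {p : ℕ} [NeZero p] {t : G} (ht : t ^ p = 1) (w : G)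
    (a : ZMod p) :
    pbra (t ^ a.val * w) (w⁻¹ * t ^ a.val) =
      (w⁻¹ * t * w) ^ (-(2 * a)).val * t ^ (2 * a).val := by
  have hpow (m : ℕ) : (w⁻¹ * t * w) ^ m = w⁻¹ * t ^ m * w := by
    simpa using conj_pow (a := w⁻¹) (b := t) (i := m)
  have hconj : (w⁻¹ * t * w) ^ p = 1 := by rw [hpow, ht]; group
  rw [pow_val_neg_of_pow_eq_one hconj, hpow, two_mul, pow_val_add_of_pow_eq_one ht, pbra]
  group

end Commutator

theorem αΓ_pow_eq_one (p : ℕ) : αΓ p ^ p = 1 :=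
  (QuotientGroup.eq_one_iff _).mpr (Subgroup.subset_normalClosure (Set.mem_insert _ _))

theorem τΓ_pow_eq_one (p : ℕ) : τΓ p ^ p = 1 :=
  (QuotientGroup.eq_one_iff _).mpr (Subgroup.subset_normalClosure (Set.mem_insert_of_mem _ rfl))

section Coordinates

variable {p : ℕ} {i x : ZMod p}

theorem σg_pow_apply_self (n : ℕ) : (σg p i ^ n) i = τΓ p ^ n := by
  simp [σg]

theorem σg_pow_apply_of_ne (h : x ≠ i) (m : ZMod p) :
    (σg p i ^ m.val) x = αΓ p ^ ((x - i) * m).val := by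
  simp [σg, h, pow_val_mul_of_pow_eq_one (αΓ_pow_eq_one p)]

theorem σgn_apply_self (n : ZMod p) :
    σgn p i n i = (αΓ p ^ n.val)⁻¹ * τΓ p * αΓ p ^ n.val := by
  simp [σgn, σg, αt]

theorem σgn_pow_apply_of_ne (h : x ≠ i) (n m : ZMod p) :
    (σgn p i n ^ m.val) x = αΓ p ^ ((x - i) * m).val := by
  simp [σgn, σg, αt, h, pow_val_mul_of_pow_eq_one (αΓ_pow_eq_one p)]

end Coordinates

theorem guptaSidki_commutator_identity_general
    (p : ℕ) (hp : p.Prime)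
    (i j k : ZMod p) (hij : i ≠ j) (hik : i ≠ k) (hjk : j ≠ k) (e : ℤ) :
    pbra (σg p i ^ ((j - k) * (e : ZMod p)).val *
        σg p j ^ ((k - i) * (e : ZMod p)).val)
      (σg p k ^ ((i - j) * (e : ZMod p)).val *
        σg p i ^ ((j - k) * (e : ZMod p)).val) =
    σgn p i ((j - i) * (i - k) * (e : ZMod p)) ^
        (-(2 * (j - k) * (e : ZMod p))).val *
      σg p i ^ (2 * (j - k) * (e : ZMod p)).val := by
  have : NeZero p := ⟨hp.ne_zero⟩
  have hα := αΓ_pow_eq_one p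
  generalize (e : ZMod p) = E
  rw [mul_assoc 2]
  funext x
  simp only [Pi.pbra_apply, Pi.mul_apply]
  by_cases hxi : x = i
  · subst x
    rw [σg_pow_apply_self, σg_pow_apply_of_ne hij, σg_pow_apply_of_ne hik, Pi.pow_apply,
      σgn_apply_self, σg_pow_apply_self,
      show (i - j) * ((k - i) * E) = (j - i) * (i - k) * E by ring,
      show (i - k) * ((i - j) * E) = -((j - i) * (i - k) * E) by ring,
      pow_val_neg_of_pow_eq_one hα]
    exact pbra_pow_val_mul_inv_mul_pow_val (τΓ_pow_eq_one p) _ _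
  · rw [σgn_pow_apply_of_ne hxi, σg_pow_apply_of_ne hxi (2 * _), mul_neg,
      pow_val_mul_pow_val_of_add_eq_zero hα (neg_add_cancel _), σg_pow_apply_of_ne hxi]
    by_cases hxj : x = j
    · subst x
      rw [σg_pow_apply_of_ne hjk, pow_val_mul_pow_val_of_add_eq_zero hα (by ring)]
      exact pbra_eq_one_of_commute (Commute.one_right _)
    rw [σg_pow_apply_of_ne hxj]
    by_cases hxk : x = k
    · subst x
      rw [pow_val_mul_pow_val_of_add_eq_zero hα (by ring)]
      exact pbra_eq_one_of_commute (Commute.one_left _)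
    rw [σg_pow_apply_of_ne hxk, ← pow_val_add_of_pow_eq_one hα,
      ← pow_val_add_of_pow_eq_one hα]
    exact pbra_eq_one_of_commute (Commute.pow_pow_self _ _ _)

/-- In `Γ^p`, for pairwise distinct `i, j, k ∈ ℤ/pℤ` and
any integer `e`, one has
`[σᵢ^{(j−k)e}·σⱼ^{(k−i)e}, σ_k^{(i−j)e}·σᵢ^{(j−k)e}]
  = σ_{i,(j−i)(i−k)e}^{−2(j−k)e}·σᵢ^{2(j−k)e}`,
all exponents and the second index of `σ_{i,·}` being read modulo `p`. -/
theorem guptaSidki_commutator_identity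
    (p : ℕ) (hp : p.Prime) (ho : Odd p)
    (i j k : ZMod p) (hij : i ≠ j) (hik : i ≠ k) (hjk : j ≠ k) (e : ℤ) :
    pbra (σg p i ^ ((j - k) * (e : ZMod p)).val *
        σg p j ^ ((k - i) * (e : ZMod p)).val)
      (σg p k ^ ((i - j) * (e : ZMod p)).val *
        σg p i ^ ((j - k) * (e : ZMod p)).val) =
    σgn p i ((j - i) * (i - k) * (e : ZMod p)) ^
        (-(2 * (j - k) * (e : ZMod p))).val *
      σg p i ^ (2 * (j - k) * (e : ZMod p)).val :=
  guptaSidki_commutator_identity_general p hp i j k hij hik hjk e
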